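/- Let G be a red-blue graph such that G_blue contains no 5-cycle and G_red contains a cycle of length n, where 7 ≤ n ≤ |G| − 1 and |G| denotes the number of vertices of G. Then G_red contains a cycle of length n − 1. -/

import Mathlib

/-- `hasCycle G m` means the simple graph `G` contains a cycle of length `m`. -/
def hasCycle {V : Type*} (G : SimpleGraph V) (m : ℕ) : Prop :=
  ∃ (v : V) (w : G.Walk v v), w.IsCycle ∧ w.length = m

/-!
Take a red `n`-cycle `c` and a vertex `u` off it, and suppose there is no red `(n - 1)`-cycle.
Then no chord `c i c (i + 2)` is red, since the cycle could skip `c (i + 1)`; and `u` is never red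
to both `c i` and `c (i + 3)`, since it could replace `c (i + 1), c (i + 2)`. The latter yields an
`i` with `u c i` and `u c (i + 6)` blue, and then `u, c i, c (i + 2), c (i + 4), c (i + 6)` is a
blue 5-cycle.
-/

open SimpleGraph Function Fin.NatCast

theorem exists_not_and_not_add_add {α : Type*} [Add α] {P : α → Prop} (x d : α)
    (h : ∀ y, ¬ (P y ∧ P (y + d))) : ∃ a, ¬ P a ∧ ¬ P (a + d + d) := by
  by_cases h1 : P (x + d)
  · exact ⟨x, fun h0 => h x ⟨h0, h1⟩, fun h2 => h _ ⟨h1, h2⟩⟩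
  by_cases h3 : P (x + d + d + d)
  · exact ⟨x + d + d, fun h2 => h _ ⟨h2, h3⟩, fun h4 => h _ ⟨h3, h4⟩⟩
  exact ⟨x + d, h1, h3⟩

section

variable {V : Type*} {G : SimpleGraph V}

theorem hasCycle_of_injOn {m : ℕ} (hm : 3 ≤ m) (f : ℕ → V) (hf : Set.InjOn f (Set.Iio m))
    (hadj : ∀ a, a + 1 < m → G.Adj (f a) (f (a + 1))) (hclose : G.Adj (f (m - 1)) (f 0)) :
    hasCycle G m := by
  refine (cycleGraph_isContained_iff hm).mp ⟨⟨⟨fun j => f j, fun {u v} huv => ?_⟩,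
    fun u v h => Fin.ext (hf u.2 v.2 h)⟩⟩
  wlog h : (u - v).val = 1 generalizing u v
  · exact (this huv.symm ((cycleGraph_adj'.mp huv).resolve_left h)).symm
  rcases le_or_gt v u with hvu | huv'
  · rw [Fin.coe_sub_iff_le.mpr hvu] at h
    obtain hu : (u : ℕ) = v + 1 := by omega
    simpa [hu] using (hadj v (by omega)).symm
  · rw [Fin.coe_sub_iff_lt.mpr huv'] at h
    obtain ⟨hu, hv⟩ : (u : ℕ) = 0 ∧ (v : ℕ) = m - 1 := by omega
    simpa [hu, hv] using hclose.symm

theorem exists_injective_of_hasCycle {n : ℕ} [NeZero n] (hn : 3 ≤ n) (h : hasCycle G n) :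
    ∃ c : Fin n → V, Injective c ∧ ∀ i, G.Adj (c i) (c (i + 1)) := by
  obtain ⟨e⟩ := (cycleGraph_isContained_iff hn).mpr h
  refine ⟨e.toHom, e.injective, fun i => e.toHom.map_adj ?_⟩
  rw [cycleGraph_adj']
  right
  rw [add_sub_cancel_left, Fin.val_one', Nat.mod_eq_of_lt (by omega)]

section CycleOnFin

variable {n : ℕ} [NeZero n] {c : Fin n → V}

theorem eq_of_apply_add_natCast_eq (hc : Injective c) (i : Fin n) {a b : ℕ} (ha : a < n)
    (hb : b < n) (h : c (i + (a : Fin n)) = c (i + (b : Fin n))) : a = b := by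
  simpa [Fin.val_cast_of_lt ha, Fin.val_cast_of_lt hb] using
    congrArg Fin.val (add_left_cancel (hc h))

theorem hasCycle_compl_five (hc : Injective c) (hn : 7 ≤ n) {u : V} (hu : ∀ j, c j ≠ u)
    (hchord : ∀ j, ¬ G.Adj (c j) (c (j + 2))) (i : Fin n) (hi : ¬ G.Adj u (c i))
    (hi' : ¬ G.Adj u (c (i + 3 + 3))) : hasCycle Gᶜ 5 := by
  let f : ℕ → V := fun | 0 => u | a + 1 => c (i + ((2 * a : ℕ) : Fin n))
  refine hasCycle_of_injOn (by norm_num) f ?_ (fun a ha => ?_) ?_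
  · rintro (_ | a) ha (_ | b) hb hab
    · rfl
    · exact absurd hab.symm (hu _)
    · exact absurd hab (hu _)
    · simp only [Set.mem_Iio] at ha hb
      have := eq_of_apply_add_natCast_eq hc i (by omega) (by omega) hab
      omega
  · rw [compl_adj]
    rcases a with _ | a
    · simpa [f] using ⟨(hu i).symm, hi⟩
    · refine ⟨fun h => ?_, ?_⟩
      · have := eq_of_apply_add_natCast_eq hc i (by omega) (by omega) h
        omega
      · simpa [f, mul_add, add_assoc] using hchord (i + ((2 * a : ℕ) : Fin n))
  · have h6 : i + ((2 * 3 : ℕ) : Fin n) = i + 3 + 3 := by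
      rw [add_assoc]
      norm_num
    exact ⟨hu _, fun h => hi' (h6 ▸ h.symm)⟩

variable (hc : Injective c) (hadj : ∀ i, G.Adj (c i) (c (i + 1)))
include hc hadj

theorem hasCycle_pred_of_adj_add_two (hn : 4 ≤ n) (i : Fin n) (h : G.Adj (c i) (c (i + 2))) :
    hasCycle G (n - 1) := by
  refine hasCycle_of_injOn (by omega) (fun a => c (i + 2 + (a : Fin n)))
    (fun a ha b hb hab => ?_) (fun a _ => ?_) ?_
  · exact eq_of_apply_add_natCast_eq hc (i + 2) (by simp only [Set.mem_Iio] at ha; omega)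
      (by simp only [Set.mem_Iio] at hb; omega) hab
  · simpa [add_assoc] using hadj (i + 2 + (a : Fin n))
  · have hwrap : (2 : Fin n) + ((n - 1 - 1 : ℕ) : Fin n) = 0 := by
      rw [← Nat.cast_ofNat, ← Nat.cast_add, show 2 + (n - 1 - 1) = n by omega, Fin.natCast_self]
    simpa [add_assoc, hwrap] using h

theorem hasCycle_pred_of_adj_adj_add_three (hn : 4 ≤ n) {u : V} (hu : ∀ j, c j ≠ u)
    (i : Fin n) (hi : G.Adj u (c i)) (hi' : G.Adj u (c (i + 3))) : hasCycle G (n - 1) := by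
  let f : ℕ → V := fun | 0 => u | a + 1 => c (i + 3 + (a : Fin n))
  refine hasCycle_of_injOn (by omega) f ?_ (fun a ha => ?_) ?_
  · rintro (_ | a) ha (_ | b) hb hab
    · rfl
    · exact absurd hab.symm (hu _)
    · exact absurd hab (hu _)
    · simp only [Set.mem_Iio] at ha hb
      rw [eq_of_apply_add_natCast_eq hc (i + 3) (by omega) (by omega) hab]
  · rcases a with _ | a
    · simpa [f] using hi'
    · simpa [f, add_assoc] using hadj (i + 3 + (a : Fin n))
  · have hwrap : (3 : Fin n) + ((n - 1 - 1 - 1 : ℕ) : Fin n) = 0 := by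
      rw [← Nat.cast_ofNat, ← Nat.cast_add, show 3 + (n - 1 - 1 - 1) = n by omega,
        Fin.natCast_self]
    rw [show n - 1 - 1 = n - 1 - 1 - 1 + 1 by omega]
    simpa [f, add_assoc, hwrap] using hi.symm

end CycleOnFin

end

/-- Lemma 3.12: if the blue subgraph `Gᶜ` has no 5-cycle and the red subgraph `G`
has an `n`-cycle, where `7 ≤ n ≤ |G| − 1`, then `G` has an `(n−1)`-cycle. -/
theorem stmt_4 {V : Type*} [Fintype V] (G : SimpleGraph V) (n : ℕ)
    (hn : 7 ≤ n) (hn' : n ≤ Fintype.card V - 1)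
    (h5 : ¬ hasCycle Gᶜ 5) (hcyc : hasCycle G n) :
    hasCycle G (n - 1) := by
  have : NeZero n := ⟨by omega⟩
  obtain ⟨c, hc, hadj⟩ := exists_injective_of_hasCycle (by omega) hcyc
  obtain ⟨u, hu⟩ : ∃ u, ∀ j, c j ≠ u := by
    by_contra! hsurj
    have := Fintype.card_le_of_surjective c hsurj
    simp only [Fintype.card_fin] at this
    omega
  by_contra hno
  have hchord : ∀ j, ¬ G.Adj (c j) (c (j + 2)) := fun j h =>
    hno (hasCycle_pred_of_adj_add_two hc hadj (by omega) j h)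
  obtain ⟨i, hi, hi'⟩ := exists_not_and_not_add_add (P := fun j => G.Adj u (c j)) 0 3
    fun j h => hno (hasCycle_pred_of_adj_adj_add_three hc hadj (by omega) hu j h.1 h.2)
  exact h5 (hasCycle_compl_five hc hn hu hchord i hi hi')
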